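/- Let S be a finite-dimensional operator system and S₀ ⊆ S an operator subsystem. Then the adjoint iᵈ : Sᵈ → S₀ᵈ of the inclusion i : S₀ ↪ S is a quotient map of operator systems, and its kernel is a null subspace of Sᵈ. -/

import Mathlib

open scoped ComplexOrder TensorProduct

noncomputable section

/-- A family of matrix cones over `V`, one in each matrix level `Mₙ(V)`. -/
def ConeFam (V : Type*) : Type _ :=
  ∀ n : ℕ, Set (Matrix (Fin n) (Fin n) V)

/-- Entrywise application of a linear map to a matrix (the `n`-th amplification). -/
def mmap {V W : Type*} [AddCommGroup V] [Module ℂ V] [AddCommGroup W] [Module ℂ W]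
    {n : ℕ} (φ : V →ₗ[ℂ] W) (M : Matrix (Fin n) (Fin n) V) : Matrix (Fin n) (Fin n) W :=
  M.map fun v => φ v

/-- Scalar congruence `A⋆ M A` of a `V`-valued matrix by a scalar matrix. -/
def matCongr {V : Type*} [AddCommGroup V] [Module ℂ V] {m n : ℕ}
    (A : Matrix (Fin m) (Fin n) ℂ) (M : Matrix (Fin m) (Fin m) V) :
    Matrix (Fin n) (Fin n) V :=
  Matrix.of fun i j => ∑ k, ∑ l, (star (A k i) * A l j) • M k l

/-- The diagonal matrix with constant diagonal entry `e`. -/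
def unitMat {V : Type*} [AddCommGroup V] [Module ℂ V] (e : V) (n : ℕ) :
    Matrix (Fin n) (Fin n) V :=
  Matrix.of fun i j => if i = j then e else 0

/-- An abstract operator system: a matrix ordered `*`-vector space together with an
Archimedean matrix order unit (Choi–Effros axioms). -/
structure OSStruct (V : Type*) [AddCommGroup V] [Module ℂ V]
    [StarAddMonoid V] [StarModule ℂ V] where
  pos : ConeFam V
  unit : V
  unit_sa : star unit = unit
  pos_sa : ∀ {n : ℕ} {M : Matrix (Fin n) (Fin n) V}, M ∈ pos n → M.conjTranspose = M
  pos_add : ∀ {n : ℕ} {M N : Matrix (Fin n) (Fin n) V}, M ∈ pos n → N ∈ pos n → M + N ∈ pos n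
  pos_smul : ∀ {n : ℕ} (r : ℝ) {M : Matrix (Fin n) (Fin n) V},
      0 ≤ r → M ∈ pos n → (r : ℂ) • M ∈ pos n
  pos_strict : ∀ {n : ℕ} {M : Matrix (Fin n) (Fin n) V}, M ∈ pos n → -M ∈ pos n → M = 0
  pos_congr : ∀ {m n : ℕ} (A : Matrix (Fin m) (Fin n) ℂ) {M : Matrix (Fin m) (Fin m) V},
      M ∈ pos m → matCongr A M ∈ pos n
  unit_pos : ∀ n, unitMat unit n ∈ pos n
  orderUnit : ∀ {n : ℕ} (M : Matrix (Fin n) (Fin n) V), M.conjTranspose = M →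
      ∃ r : ℝ, 0 < r ∧ (r : ℂ) • unitMat unit n + M ∈ pos n
  archimedean : ∀ {n : ℕ} (M : Matrix (Fin n) (Fin n) V),
      (∀ ε : ℝ, 0 < ε → (ε : ℂ) • unitMat unit n + M ∈ pos n) → M ∈ pos n

section Maps
variable {V W : Type*} [AddCommGroup V] [Module ℂ V] [AddCommGroup W] [Module ℂ W]

/-- `k`-positivity of a linear map with respect to given matrix cone families. -/
def osKPos (C : ConeFam V) (D : ConeFam W) (k : ℕ) (φ : V →ₗ[ℂ] W) : Prop :=
  ∀ M ∈ C k, mmap φ M ∈ D k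

/-- Complete positivity. -/
def osCP (C : ConeFam V) (D : ConeFam W) (φ : V →ₗ[ℂ] W) : Prop :=
  ∀ k, osKPos C D k φ

/-- Unital complete positivity. -/
def osUCP (C : ConeFam V) (e : V) (D : ConeFam W) (f : W) (φ : V →ₗ[ℂ] W) : Prop :=
  osCP C D φ ∧ φ e = f

/-- Complete order embedding. -/
def osCOEmbedding (C : ConeFam V) (D : ConeFam W) (φ : V →ₗ[ℂ] W) : Prop :=
  Function.Injective φ ∧ osCP C D φ ∧
    ∀ (n : ℕ) (M : Matrix (Fin n) (Fin n) V), mmap φ M ∈ D n → M ∈ C n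

/-- Operator system quotient map: a surjective completely positive map such that the
induced map on the quotient by its kernel is a complete order isomorphism, expressed
via the standard `ε`-lifting characterisation of positive matrices. -/
def osQuotientMap (C : ConeFam V) (D : ConeFam W) (f : W) (φ : V →ₗ[ℂ] W) : Prop :=
  Function.Surjective φ ∧ osCP C D φ ∧
    ∀ (n : ℕ), ∀ N ∈ D n, ∀ ε : ℝ, 0 < ε →
      ∃ M ∈ C n, mmap φ M = N + (ε : ℂ) • unitMat f n

/-- Positivity of a single element (as a `1 × 1` matrix). -/
def posElem (C : ConeFam V) (v : V) : Prop :=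
  (Matrix.of (fun _ _ => v) : Matrix (Fin 1) (Fin 1) V) ∈ C 1

/-- A state: a unital positive linear functional. -/
def osState (C : ConeFam V) (e : V) (f : Module.Dual ℂ V) : Prop :=
  f e = 1 ∧ ∀ v, posElem C v → 0 ≤ f v

/-- A faithful state. -/
def osFaithfulState (C : ConeFam V) (e : V) (f : Module.Dual ℂ V) : Prop :=
  osState C e f ∧ ∀ v, posElem C v → f v = 0 → v = 0

end Maps

section Dual
variable {V : Type*} [AddCommGroup V] [Module ℂ V]

/-- Flatten a matrix of scalar matrices to a scalar matrix over the product index. -/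
def blockify {n : ℕ} {ι : Type*} (M : Matrix (Fin n) (Fin n) (Matrix ι ι ℂ)) :
    Matrix (Fin n × ι) (Fin n × ι) ℂ :=
  Matrix.of fun p q => M p.1 q.1 p.2 q.2

/-- The matrix-valued map associated with a matrix of functionals. -/
def matValued {n : ℕ} (F : Matrix (Fin n) (Fin n) (Module.Dual ℂ V)) :
    V →ₗ[ℂ] Matrix (Fin n) (Fin n) ℂ where
  toFun v := Matrix.of fun i j => F i j v
  map_add' a b := by ext i j; simp
  map_smul' c a := by ext i j; simp

/-- Complete positivity of a map into a matrix algebra `Mₖ(ℂ)`. -/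
def CPIntoMat (C : ConeFam V) {k : ℕ} (φ : V →ₗ[ℂ] Matrix (Fin k) (Fin k) ℂ) : Prop :=
  ∀ (n : ℕ), ∀ M ∈ C n, (blockify (mmap φ M)).PosSemidef

/-- The dual matrix ordering on `Sᵈ`: a matrix of functionals is positive iff the
associated matrix-valued map is completely positive. -/
def osDualCone (C : ConeFam V) : ConeFam (Module.Dual ℂ V) :=
  fun _ => { F | CPIntoMat C (matValued F) }

/-- The induced (subsystem) matrix ordering on a subspace. -/
def osSubCone (C : ConeFam V) (S₀ : Submodule ℂ V) : ConeFam S₀ :=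
  fun n => { M | mmap S₀.subtype M ∈ C n }

end Dual

/-- A null subspace: a `*`-closed subspace containing no nonzero positive element. -/
def IsNullSubspace {V : Type*} [AddCommGroup V] [Module ℂ V] [StarAddMonoid V]
    (C : ConeFam V) (J : Submodule ℂ V) : Prop :=
  (∀ v ∈ J, star v ∈ J) ∧ ∀ v ∈ J, posElem C v → v = 0

/-- The canonical involution on the dual space: `f⋆ (s) = conj (f (s⋆))`. -/
def dstar {V : Type*} [AddCommGroup V] [Module ℂ V] [StarAddMonoid V] [StarModule ℂ V]
    (f : Module.Dual ℂ V) : Module.Dual ℂ V where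
  toFun v := starRingEnd ℂ (f (star v))
  map_add' a b := by simp
  map_smul' c a := by
    simp only [star_smul, LinearMap.map_smul, smul_eq_mul, map_mul, RingHom.id_apply,
      starRingEnd_apply, star_star]

section TensorDefs
variable {V W : Type*} [AddCommGroup V] [Module ℂ V] [AddCommGroup W] [Module ℂ W]

/-- Kronecker product of scalar matrices. -/
def osKron {k m : ℕ} (X : Matrix (Fin k) (Fin k) ℂ) (Y : Matrix (Fin m) (Fin m) ℂ) :
    Matrix (Fin k × Fin m) (Fin k × Fin m) ℂ :=
  Matrix.of fun p q => X p.1 q.1 * Y p.2 q.2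

/-- The map `φ ⊗ ψ : V ⊗ W → M_k ⊗ M_m = M_{km}`. -/
def osFuse {k m : ℕ} (φ : V →ₗ[ℂ] Matrix (Fin k) (Fin k) ℂ)
    (ψ : W →ₗ[ℂ] Matrix (Fin m) (Fin m) ℂ) :
    V ⊗[ℂ] W →ₗ[ℂ] Matrix (Fin k × Fin m) (Fin k × Fin m) ℂ :=
  TensorProduct.lift (LinearMap.mk₂ ℂ (fun v w => osKron (φ v) (ψ w))
    (fun v v' w => by ext p q; simp [osKron, add_mul])
    (fun c v w => by ext p q; simp [osKron, smul_eq_mul]; ring)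
    (fun v w w' => by ext p q; simp [osKron, mul_add])
    (fun c v w => by ext p q; simp [osKron, smul_eq_mul]; ring))

/-- The minimal operator system tensor cone. -/
def osMin (C : ConeFam V) (e : V) (D : ConeFam W) (f : W) : ConeFam (V ⊗[ℂ] W) :=
  fun n => { U | ∀ (k m : ℕ) (φ : V →ₗ[ℂ] Matrix (Fin k) (Fin k) ℂ)
      (ψ : W →ₗ[ℂ] Matrix (Fin m) (Fin m) ℂ),
      CPIntoMat C φ → φ e = 1 → CPIntoMat D ψ → ψ f = 1 →
      (blockify (mmap (osFuse φ ψ) U)).PosSemidef }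

/-- The elementary tensor `P ⊗ Q` of a `V`-valued and a `W`-valued matrix. -/
def tensorElemMat {k m : ℕ} (P : Matrix (Fin k) (Fin k) V) (Q : Matrix (Fin m) (Fin m) W) :
    Matrix (Fin (k * m)) (Fin (k * m)) (V ⊗[ℂ] W) :=
  Matrix.of fun i j =>
    P (finProdFinEquiv.symm i).1 (finProdFinEquiv.symm j).1 ⊗ₜ[ℂ]
      Q (finProdFinEquiv.symm i).2 (finProdFinEquiv.symm j).2

/-- The cones `Dₙ^max` of the maximal tensor product. -/
def osMaxD (C : ConeFam V) (D : ConeFam W) : ConeFam (V ⊗[ℂ] W) :=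
  fun n => { U | ∃ (k m : ℕ) (P : Matrix (Fin k) (Fin k) V) (Q : Matrix (Fin m) (Fin m) W)
      (A : Matrix (Fin (k * m)) (Fin n) ℂ),
      P ∈ C k ∧ Q ∈ D m ∧ U = matCongr A (tensorElemMat P Q) }

/-- The maximal operator system tensor cone (Archimedeanization of `Dₙ^max`). -/
def osMax (C : ConeFam V) (e : V) (D : ConeFam W) (f : W) : ConeFam (V ⊗[ℂ] W) :=
  fun n => { U | ∀ ε : ℝ, 0 < ε → (ε : ℂ) • unitMat (e ⊗ₜ[ℂ] f) n + U ∈ osMaxD C D n }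

end TensorDefs

/-- The canonical matrix ordering of a C*-algebra: `M ≥ 0` iff `M = N⋆ N`. -/
def cstarPos (A : Type*) [Ring A] [StarRing A] [Algebra ℂ A] : ConeFam A :=
  fun n => { M | ∃ N : Matrix (Fin n) (Fin n) A, M = N.conjTranspose * N }

/-- The (local) lifting property of a finite dimensional operator system: every ucp map
into a quotient C*-algebra `A/I` (presented by a surjective unital `*`-homomorphism)
admits a completely positive lift. -/
def osLiftingProperty {V : Type*} [AddCommGroup V] [Module ℂ V] (C : ConeFam V) (e : V) :
    Prop :=
  ∀ (A B : Type) [CStarAlgebra A] [CStarAlgebra B] (q : A →⋆ₐ[ℂ] B),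
    Function.Surjective (⇑q) →
    ∀ φ : V →ₗ[ℂ] B, osUCP C e (cstarPos B) 1 φ →
      ∃ ψ : V →ₗ[ℂ] A, osCP C (cstarPos A) ψ ∧ q.toAlgHom.toLinearMap ∘ₗ ψ = φ

/-- Exactness of a (finite dimensional) operator system: for every quotient of C*-algebras
the natural map `(S ⊗_min A)/(S ⊗ I) → S ⊗_min (A/I)` is a complete order isomorphism. -/
def osExact {V : Type*} [AddCommGroup V] [Module ℂ V] (C : ConeFam V) (e : V) : Prop :=
  ∀ (A B : Type) [CStarAlgebra A] [CStarAlgebra B] (q : A →⋆ₐ[ℂ] B),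
    Function.Surjective (⇑q) →
    ∀ (n : ℕ) (U : Matrix (Fin n) (Fin n) (V ⊗[ℂ] B)),
      U ∈ osMin C e (cstarPos B) (1 : B) n ↔
        ∀ ε : ℝ, 0 < ε → ∃ P ∈ osMin C e (cstarPos A) (1 : A) n,
          mmap (LinearMap.lTensor V q.toAlgHom.toLinearMap) P
            = U + (ε : ℂ) • unitMat (e ⊗ₜ[ℂ] (1 : B)) n

/-- Kirchberg's local lifting property (LLP) of a unital C*-algebra. -/
def cstarLLP (U : Type*) [CStarAlgebra U] : Prop :=
  ∀ (A B : Type) [CStarAlgebra A] [CStarAlgebra B] (q : A →⋆ₐ[ℂ] B),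
    Function.Surjective (⇑q) →
    ∀ (θ : U →ₗ[ℂ] B), osUCP (cstarPos U) 1 (cstarPos B) 1 θ →
    ∀ (F : Submodule ℂ U), FiniteDimensional ℂ F → (∀ x ∈ F, star x ∈ F) →
    ∀ (h1 : (1 : U) ∈ F),
      ∃ ψ : (F : Type _) →ₗ[ℂ] A,
        osUCP (osSubCone (cstarPos U) F) ⟨1, h1⟩ (cstarPos A) 1 ψ ∧
        q.toAlgHom.toLinearMap ∘ₗ ψ = θ ∘ₗ F.subtype

end

/-!
Pair `F ∈ Mₙ(Vᵈ)` with `P ∈ Mₙ(V)` by `⟨F, P⟩ = ∑ᵢⱼ Fᵢⱼ(Pᵢⱼ)`. The quadratic forms of the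
matrices `[Fᵢⱼ(Mₖₗ)]` are the values of `⟨F, ·⟩` on scalar congruences `A⋆ M A`, so `F` is
positive in `Mₙ(Vᵈ)` exactly when the single functional `⟨F, ·⟩` is positive on `Mₙ(V)⁺`.
Lifting a positive `N ∈ Mₙ(S₀ᵈ)` is therefore Krein's extension of a positive functional from
`Mₙ(S₀)` to `Mₙ(S)` (Arveson's extension theorem); it follows from M. Riesz's extension theorem
applied to real parts, the order unit of `Mₙ(S)` lying in `Mₙ(S₀)`. Adding `ε (δ ⊗ 1)` to the lift
gives the `ε`-lifts required of a quotient map. A positive functional vanishing on the order unit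
vanishes on every self-adjoint element, which lies between two multiples of the unit; hence the
kernel `{g | g|S₀ = 0}` contains no nonzero positive element, and it is `⋆`-closed because `S₀` is.
-/

open scoped ComplexStarModule ComplexConjugate Matrix
open Complex

section OrderUnit

variable {W : Type*} [AddCommGroup W] [Module ℂ W] [StarAddMonoid W]

def IsOrderUnit (K : Set W) (e : W) : Prop :=
  ∀ h : W, IsSelfAdjoint h → ∃ r : ℝ, r • e + h ∈ K

theorem Module.Dual.isSelfAdjoint_apply_of_nonneg {K : Set W} {e : W} (he : e ∈ K)
    (hKe : IsOrderUnit K e) {W₀ : Submodule ℂ W} (heW₀ : e ∈ W₀) (f : Module.Dual ℂ W)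
    (hf : ∀ x ∈ W₀, x ∈ K → 0 ≤ f x) {h : W} (hW₀ : h ∈ W₀) (hh : IsSelfAdjoint h) :
    IsSelfAdjoint (f h) := by
  obtain ⟨r, hr⟩ := hKe h hh
  have hrh : r • e + h ∈ W₀ := add_mem (Submodule.smul_of_tower_mem _ _ heW₀) hW₀
  have key : f h = f (r • e + h) - r • f e := by
    rw [map_add, LinearMap.map_smul_of_tower]
    abel
  rw [key]
  exact (IsSelfAdjoint.of_nonneg (hf _ hrh hr)).sub
    ((IsSelfAdjoint.all r).smul (IsSelfAdjoint.of_nonneg (hf e heW₀ he)))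

variable [StarModule ℂ W]

theorem Submodule.realPart_mem {W₀ : Submodule ℂ W} (hW₀ : ∀ x ∈ W₀, star x ∈ W₀) {x : W}
    (hx : x ∈ W₀) : (ℜ x : W) ∈ W₀ := by
  rw [realPart_apply_coe]
  exact Submodule.smul_of_tower_mem _ _ (add_mem hx (hW₀ x hx))

theorem Submodule.imaginaryPart_mem {W₀ : Submodule ℂ W} (hW₀ : ∀ x ∈ W₀, star x ∈ W₀) {x : W}
    (hx : x ∈ W₀) : (ℑ x : W) ∈ W₀ := by
  rw [imaginaryPart_apply_coe]
  exact W₀.smul_mem _ (Submodule.smul_of_tower_mem _ _ (sub_mem hx (hW₀ x hx)))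

namespace Module.Dual

theorem apply_eq_realPart_add_I_mul (f : Module.Dual ℂ W) (x : W) :
    f x = f (ℜ x) + I * f (ℑ x) := by
  conv_lhs => rw [← realPart_add_I_smul_imaginaryPart x]
  rw [map_add, map_smul, smul_eq_mul]

theorem map_star_of_isSelfAdjoint (f : Module.Dual ℂ W) {W₀ : Submodule ℂ W}
    (hW₀ : ∀ x ∈ W₀, star x ∈ W₀) (hf : ∀ h ∈ W₀, IsSelfAdjoint h → IsSelfAdjoint (f h))
    {x : W} (hx : x ∈ W₀) : f (star x) = conj (f x) := by
  have hre := (hf _ (Submodule.realPart_mem hW₀ hx) (ℜ x).2).star_eq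
  have him := (hf _ (Submodule.imaginaryPart_mem hW₀ hx) (ℑ x).2).star_eq
  conv_lhs => rw [← realPart_add_I_smul_imaginaryPart x]
  rw [star_add, star_smul, (ℜ x).2.star_eq, (ℑ x).2.star_eq, apply_eq_realPart_add_I_mul f x]
  simp only [map_add, map_smul, smul_eq_mul, map_mul, conj_I]
  rw [starRingEnd_apply, starRingEnd_apply, hre, him, ← starRingEnd_apply, conj_I, neg_mul]

theorem map_star_of_nonneg {K : Set W} {e : W} (he : e ∈ K) (hKe : IsOrderUnit K e)
    {f : Module.Dual ℂ W} (hf : ∀ x ∈ K, 0 ≤ f x) (x : W) : f (star x) = conj (f x) :=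
  f.map_star_of_isSelfAdjoint (W₀ := ⊤) (fun _ _ => Submodule.mem_top)
    (fun _ _ hh => f.isSelfAdjoint_apply_of_nonneg he hKe Submodule.mem_top
      (fun x _ hx => hf x hx) Submodule.mem_top hh) Submodule.mem_top

theorem eq_zero_of_nonneg_of_apply_eq_zero {K : Set W} {e : W} (hKe : IsOrderUnit K e)
    {f : Module.Dual ℂ W} (hf : ∀ x ∈ K, 0 ≤ f x) (hfe : f e = 0) : f = 0 := by
  have hsa (h : W) (hh : IsSelfAdjoint h) : f h = 0 := by
    obtain ⟨r, hr⟩ := hKe h hh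
    obtain ⟨r', hr'⟩ := hKe (-h) hh.neg
    have h1 := hf _ hr
    have h2 := hf _ hr'
    rw [map_add, LinearMap.map_smul_of_tower, hfe, smul_zero, zero_add] at h1 h2
    rw [map_neg, neg_nonneg] at h2
    exact le_antisymm h2 h1
  ext x
  rw [apply_eq_realPart_add_I_mul, hsa _ (ℜ x).2, hsa _ (ℑ x).2, mul_zero, add_zero,
    LinearMap.zero_apply]

theorem extendRCLike_nonneg {K : PointedCone ℝ W} (hK : ∀ x ∈ K, IsSelfAdjoint x)
    {G : Module.Dual ℝ W} (hG : ∀ x, (ℜ x : W) ∈ K → 0 ≤ G x) {x : W} (hx : x ∈ K) :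
    0 ≤ extendRCLike (𝕜 := ℂ) G x := by
  have hIx (c : ℝ) : 0 ≤ G (c • I • x) := hG _ <| by
    rw [map_smul, realPart_I_smul, (hK x hx).imaginaryPart]
    simp
  have h1 := hIx 1
  have h2 := hIx (-1)
  rw [one_smul] at h1
  rw [neg_smul, one_smul, map_neg, neg_nonneg] at h2
  refine nonneg_iff.2 ⟨?_, ?_⟩
  · rw [← RCLike.re_to_complex, re_extendRCLike_apply]
    exact hG x (by rwa [(hK x hx).coe_realPart])
  · rw [← RCLike.im_to_complex, im_extendRCLike_apply, RCLike.I_to_complex, le_antisymm h2 h1,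
      neg_zero]

theorem exists_extension_nonneg (K : PointedCone ℝ W) (hK : ∀ x ∈ K, IsSelfAdjoint x) {e : W}
    (he : e ∈ K) (hKe : IsOrderUnit (K : Set W) e) {W₀ : Submodule ℂ W} (heW₀ : e ∈ W₀)
    (hW₀ : ∀ x ∈ W₀, star x ∈ W₀) (f : Module.Dual ℂ W) (hf : ∀ x ∈ W₀, x ∈ K → 0 ≤ f x) :
    ∃ g : Module.Dual ℂ W, (∀ x ∈ W₀, g x = f x) ∧ ∀ x ∈ K, 0 ≤ g x := by
  -- M. Riesz extension of `re ∘ f` over `ℝ`, for the cone of elements with real part in `K`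
  set s := K.comap ((selfAdjoint.submodule ℝ W).subtype ∘ₗ realPart)
  have mem_s (x : W) : x ∈ s ↔ (ℜ x : W) ∈ K := PointedCone.mem_comap
  let fr : W →ₗ.[ℝ] ℝ := ⟨W₀.restrictScalars ℝ, (reLm ∘ₗ f.restrictScalars ℝ).domRestrict _⟩
  have nonneg (x : fr.domain) (hx : (x : W) ∈ s) : 0 ≤ fr x := by
    have him := isSelfAdjoint_apply_of_nonneg he hKe heW₀ f hf
      (Submodule.imaginaryPart_mem hW₀ x.2) (ℑ (x : W)).2
    have hre := hf _ (Submodule.realPart_mem hW₀ x.2) ((mem_s x).1 hx)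
    show 0 ≤ (f x).re
    rw [apply_eq_realPart_add_I_mul, add_re, I_mul_re, conj_eq_iff_im.1 him.star_eq, neg_zero,
      add_zero]
    exact (nonneg_iff.1 hre).1
  have dense (y : W) : ∃ x : fr.domain, (x : W) + y ∈ s := by
    obtain ⟨r, hr⟩ := hKe _ (ℜ y).2
    refine ⟨⟨r • e, Submodule.smul_of_tower_mem _ _ heW₀⟩, (mem_s _).2 ?_⟩
    convert hr using 1
    simp [(hK e he).coe_realPart]
  obtain ⟨G, hGf, hGs⟩ := riesz_extension s fr nonneg dense
  have hGf' (x : W) (hx : x ∈ W₀) : G x = (f x).re := hGf ⟨x, hx⟩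
  refine ⟨extendRCLike G, fun x hx => Complex.ext ?_ ?_,
    fun x hx => extendRCLike_nonneg hK (fun y hy => hGs y ((mem_s y).2 hy)) hx⟩
  · rw [← RCLike.re_to_complex, re_extendRCLike_apply, hGf' x hx]
  · rw [← RCLike.im_to_complex, im_extendRCLike_apply, RCLike.I_to_complex,
      hGf' _ (W₀.smul_mem I hx), map_smul,
      smul_eq_mul, I_mul_re, neg_neg]

end Module.Dual

end OrderUnit

section MatrixPairing

variable {V : Type*} [AddCommGroup V] [Module ℂ V] {n : ℕ}

theorem mmap_eq_mapMatrix {W : Type*} [AddCommGroup W] [Module ℂ W] (φ : V →ₗ[ℂ] W)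
    (M : Matrix (Fin n) (Fin n) V) : mmap φ M = φ.mapMatrix M := rfl

theorem mmap_unitMat {W : Type*} [AddCommGroup W] [Module ℂ W] (φ : V →ₗ[ℂ] W) (e : V) :
    mmap φ (unitMat e n) = unitMat (φ e) n := by
  ext i j
  by_cases h : i = j <;> simp [mmap, unitMat, h]

theorem matCongr_one (M : Matrix (Fin n) (Fin n) V) : matCongr 1 M = M := by
  ext i j
  simp [matCongr, Matrix.one_apply]

def matPairing : Matrix (Fin n) (Fin n) (Module.Dual ℂ V) →ₗ[ℂ]
    Module.Dual ℂ (Matrix (Fin n) (Fin n) V) where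
  toFun F := ∑ i, ∑ j, F i j ∘ₗ Matrix.entryLinearMap ℂ V i j
  map_add' F G := by simp [Finset.sum_add_distrib, LinearMap.add_comp]
  map_smul' c F := by simp [Finset.smul_sum, LinearMap.smul_comp]

theorem matPairing_apply (F : Matrix (Fin n) (Fin n) (Module.Dual ℂ V))
    (P : Matrix (Fin n) (Fin n) V) : matPairing F P = ∑ i, ∑ j, F i j (P i j) := by
  simp [matPairing]

theorem matPairing_single (F : Matrix (Fin n) (Fin n) (Module.Dual ℂ V)) (i j : Fin n) (v : V) :
    matPairing F (Matrix.single i j v) = F i j v := by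
  rw [matPairing_apply, Finset.sum_eq_single i, Finset.sum_eq_single j] <;>
    simp +contextual [Matrix.single_apply, eq_comm]

theorem matPairing_mmap_dualMap {U : Type*} [AddCommGroup U] [Module ℂ U] (φ : U →ₗ[ℂ] V)
    (F : Matrix (Fin n) (Fin n) (Module.Dual ℂ V)) (Q : Matrix (Fin n) (Fin n) U) :
    matPairing (mmap φ.dualMap F) Q = matPairing F (mmap φ Q) := by
  simp [matPairing_apply, mmap]

def matOfFunctional (s : Module.Dual ℂ (Matrix (Fin n) (Fin n) V)) :
    Matrix (Fin n) (Fin n) (Module.Dual ℂ V) :=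
  Matrix.of fun i j => s ∘ₗ Matrix.singleLinearMap ℂ i j

theorem matPairing_matOfFunctional (s : Module.Dual ℂ (Matrix (Fin n) (Fin n) V)) :
    matPairing (matOfFunctional s) = s := by
  ext P
  conv_rhs => rw [Matrix.matrix_eq_sum_single P]
  simp [matPairing_apply, matOfFunctional, map_sum]

theorem dotProduct_blockify_mulVec {k : ℕ} (F : Matrix (Fin n) (Fin n) (Module.Dual ℂ V))
    (M : Matrix (Fin k) (Fin k) V) (ξ : Fin k × Fin n → ℂ) :
    star ξ ⬝ᵥ blockify (mmap (matValued F) M) *ᵥ ξ =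
      matPairing F (matCongr (Matrix.of fun i p => ξ (i, p)) M) := by
  simp only [dotProduct, Matrix.mulVec, matPairing_apply, matCongr, blockify, mmap, matValued,
    Fintype.sum_prod_type, Finset.mul_sum, map_sum, map_smul, Matrix.of_apply, Matrix.map_apply,
    LinearMap.coe_mk, AddHom.coe_mk, Pi.star_apply, smul_eq_mul]
  rw [Finset.sum_comm]
  refine Finset.sum_congr rfl fun p _ => ?_
  conv_rhs => rw [Finset.sum_comm]
  refine Finset.sum_congr rfl fun i _ => ?_
  rw [Finset.sum_comm]
  refine Finset.sum_congr rfl fun q _ => Finset.sum_congr rfl fun l _ => ?_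
  ring

theorem matPairing_nonneg_of_cpIntoMat {C : ConeFam V}
    {F : Matrix (Fin n) (Fin n) (Module.Dual ℂ V)} (hF : CPIntoMat C (matValued F))
    {P : Matrix (Fin n) (Fin n) V} (hP : P ∈ C n) : 0 ≤ matPairing F P := by
  have := (hF n P hP).dotProduct_mulVec_nonneg fun z => (1 : Matrix (Fin n) (Fin n) ℂ) z.1 z.2
  rw [dotProduct_blockify_mulVec] at this
  rwa [← matCongr_one P]

end MatrixPairing

namespace OSStruct

variable {V : Type*} [AddCommGroup V] [Module ℂ V] [StarAddMonoid V] [StarModule ℂ V]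
  (S : OSStruct V) {n : ℕ}

def posCone (n : ℕ) : PointedCone ℝ (Matrix (Fin n) (Fin n) V) where
  carrier := S.pos n
  add_mem' := S.pos_add
  zero_mem' := by simpa using S.pos_smul 0 le_rfl (S.unit_pos n)
  smul_mem' c _ hP := S.pos_smul c c.2 hP

theorem isOrderUnit_unitMat : IsOrderUnit (S.pos n) (unitMat S.unit n) := fun P hP =>
  let ⟨r, _, hr⟩ := S.orderUnit P hP
  ⟨r, hr⟩

theorem isOrderUnit_unit : IsOrderUnit {v | posElem S.pos v} S.unit := fun h hh => by
  obtain ⟨r, hr⟩ := S.isOrderUnit_unitMat (n := 1) (Matrix.of fun _ _ => h)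
    (by ext i j; simpa using hh.star_eq)
  refine ⟨r, ?_⟩
  show Matrix.of _ ∈ S.pos 1
  convert hr using 2
  ext i j
  simp [Subsingleton.elim i j, unitMat]

theorem posElem_diag {M : Matrix (Fin n) (Fin n) V} (hM : M ∈ S.pos n) (p : Fin n) :
    posElem S.pos (M p p) := by
  show Matrix.of _ ∈ S.pos 1
  convert S.pos_congr (Matrix.of fun i (_ : Fin 1) => if i = p then (1 : ℂ) else 0) hM using 2
  ext i j
  simp [matCongr]

theorem cpIntoMat_of_matPairing_nonneg {F : Matrix (Fin n) (Fin n) (Module.Dual ℂ V)}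
    (hF : ∀ P ∈ S.pos n, 0 ≤ matPairing F P) : CPIntoMat S.pos (matValued F) := by
  intro k M hM
  refine .of_dotProduct_mulVec_nonneg ?_ fun ξ => ?_
  · ext a b
    have hMab : star (M b.1 a.1) = M a.1 b.1 := by
      simpa using congrFun (congrFun (S.pos_sa hM) a.1) b.1
    have := Module.Dual.map_star_of_nonneg (S.unit_pos n) S.isOrderUnit_unitMat hF
      (Matrix.single b.2 a.2 (M b.1 a.1))
    rw [Matrix.star_eq_conjTranspose, Matrix.conjTranspose_single, hMab, matPairing_single,
      matPairing_single] at this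
    exact this.symm
  · rw [dotProduct_blockify_mulVec]
    exact hF _ (S.pos_congr _ hM)

theorem matPairing_unitMat_nonneg {δ : Module.Dual ℂ V} (hδ : ∀ v, posElem S.pos v → 0 ≤ δ v)
    {P : Matrix (Fin n) (Fin n) V} (hP : P ∈ S.pos n) : 0 ≤ matPairing (unitMat δ n) P := by
  rw [matPairing_apply]
  refine Finset.sum_nonneg fun p _ => ?_
  rw [Finset.sum_eq_single p (fun j _ h => by simp [unitMat, Ne.symm h]) (by simp)]
  simpa [unitMat] using hδ _ (S.posElem_diag hP p)

/-- Arveson's extension theorem for maps into `Mₙ`. -/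
theorem exists_cpIntoMat_extension {S₀ : Submodule ℂ V} (hunit : S.unit ∈ S₀)
    (hstar : ∀ v ∈ S₀, star v ∈ S₀) {N : Matrix (Fin n) (Fin n) (Module.Dual ℂ S₀)}
    (hN : CPIntoMat (osSubCone S.pos S₀) (matValued N)) :
    ∃ M : Matrix (Fin n) (Fin n) (Module.Dual ℂ V),
      CPIntoMat S.pos (matValued M) ∧ mmap S₀.subtype.dualMap M = N := by
  have hsurj := LinearMap.dualMap_surjective_of_injective S₀.injective_subtype
  set N' := N.map (Function.surjInv hsurj)
  have hN' : mmap S₀.subtype.dualMap N' = N :=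
    Matrix.ext fun i j => Function.surjInv_eq hsurj _
  have hf (P) (hPS : P ∈ S₀.matrix) (hP : P ∈ S.posCone n) : 0 ≤ matPairing N' P := by
    have : matPairing N' P = matPairing N (Matrix.of fun i j => ⟨P i j, hPS i j⟩) := by
      rw [← hN', matPairing_mmap_dualMap]
      rfl
    exact this ▸ matPairing_nonneg_of_cpIntoMat hN hP
  obtain ⟨g, hgN', hg⟩ := Module.Dual.exists_extension_nonneg (W₀ := S₀.matrix) (S.posCone n)
    (fun _ => S.pos_sa) (S.unit_pos n) S.isOrderUnit_unitMat
    (fun i j => by by_cases h : i = j <;> simp [unitMat, h, hunit])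
    (fun P (hP : ∀ i j, P i j ∈ S₀) i j => hstar _ (hP j i)) (matPairing N') hf
  refine ⟨matOfFunctional g, S.cpIntoMat_of_matPairing_nonneg ?_, ?_⟩
  · rwa [matPairing_matOfFunctional]
  · refine Matrix.ext fun i j => LinearMap.ext fun v => ?_
    have hv : Matrix.single i j (v : V) ∈ S₀.matrix := fun k l => by
      by_cases h : i = k ∧ j = l <;> simp [h]
    rw [← hN']
    simp [mmap, matOfFunctional, hgN' _ hv, matPairing_single]

end OSStruct

theorem Submodule.mem_ker_dualMap_subtype {V : Type*} [AddCommGroup V] [Module ℂ V]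
    {S₀ : Submodule ℂ V} {g : Module.Dual ℂ V} :
    g ∈ LinearMap.ker S₀.subtype.dualMap ↔ ∀ v ∈ S₀, g v = 0 := by
  simp [LinearMap.ker_dualMap_eq_dualAnnihilator_range, Submodule.mem_dualAnnihilator]

theorem statement6_general {V : Type} [AddCommGroup V] [Module ℂ V] [StarAddMonoid V] [StarModule ℂ V]
    (S : OSStruct V) (S₀ : Submodule ℂ V) (hunit : S.unit ∈ S₀)
    (hstar : ∀ v ∈ S₀, star v ∈ S₀)
    (δ : Module.Dual ℂ V) (hδ : osFaithfulState S.pos S.unit δ) :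
    osQuotientMap (osDualCone S.pos) (osDualCone (osSubCone S.pos S₀))
        (S₀.subtype.dualMap δ) S₀.subtype.dualMap ∧
      (∀ g ∈ LinearMap.ker S₀.subtype.dualMap, dstar g ∈ LinearMap.ker S₀.subtype.dualMap) ∧
      (∀ g ∈ LinearMap.ker S₀.subtype.dualMap,
        (∀ v, posElem S.pos v → 0 ≤ g v) → g = 0) := by
  refine ⟨⟨LinearMap.dualMap_surjective_of_injective S₀.injective_subtype,
    fun n F hF m Q hQ => hF m _ hQ, fun n N hN ε hε => ?_⟩, fun g hg => ?_,
    fun g hg hg_nonneg => ?_⟩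
  · obtain ⟨M, hM, rfl⟩ := S.exists_cpIntoMat_extension hunit hstar hN
    refine ⟨M + (ε : ℂ) • unitMat δ n, S.cpIntoMat_of_matPairing_nonneg fun P hP => ?_, ?_⟩
    · rw [map_add, map_smul, LinearMap.add_apply, LinearMap.smul_apply, Complex.coe_smul]
      exact add_nonneg (matPairing_nonneg_of_cpIntoMat hM hP)
        (smul_nonneg hε.le (S.matPairing_unitMat_nonneg hδ.1.2 hP))
    · rw [mmap_eq_mapMatrix, map_add, map_smul, ← mmap_eq_mapMatrix, ← mmap_eq_mapMatrix,
        mmap_unitMat]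
  · rw [Submodule.mem_ker_dualMap_subtype] at hg ⊢
    intro v hv
    simp [dstar, hg _ (hstar v hv)]
  · rw [Submodule.mem_ker_dualMap_subtype] at hg
    exact Module.Dual.eq_zero_of_nonneg_of_apply_eq_zero S.isOrderUnit_unit hg_nonneg (hg _ hunit)

/-- The adjoint of the inclusion of an operator subsystem of a finite
dimensional operator system is a quotient map whose kernel is a null subspace of the dual. -/
theorem statement6 {V : Type} [AddCommGroup V] [Module ℂ V] [StarAddMonoid V] [StarModule ℂ V] [FiniteDimensional ℂ V]
    (S : OSStruct V) (S₀ : Submodule ℂ V) (hunit : S.unit ∈ S₀)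
    (hstar : ∀ v ∈ S₀, star v ∈ S₀)
    (δ : Module.Dual ℂ V) (hδ : osFaithfulState S.pos S.unit δ) :
    osQuotientMap (osDualCone S.pos) (osDualCone (osSubCone S.pos S₀))
        (S₀.subtype.dualMap δ) S₀.subtype.dualMap ∧
      (∀ g ∈ LinearMap.ker S₀.subtype.dualMap, dstar g ∈ LinearMap.ker S₀.subtype.dualMap) ∧
      (∀ g ∈ LinearMap.ker S₀.subtype.dualMap,
        (∀ v, posElem S.pos v → 0 ≤ g v) → g = 0) :=
  statement6_general S S₀ hunit hstar δ hδ
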